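/- Let R be a nonempty closed and bounded subset of the nonnegative reals satisfying the 4-values condition and let l > 2·max(R). Then the set {r + n·l | n ∈ ℕ, r ∈ R} is a closed subset of the nonnegative reals satisfying the 4-values condition. -/
import Mathlib


/-- For `a, b ∈ R`, `a ⊕ b := sup {x ∈ R | x ≤ a + b}`. -/
noncomputable def oplus (R : Set ℝ) (a b : ℝ) : ℝ :=
  sSup {x | x ∈ R ∧ x ≤ a + b}

/-- A triple `(a,b,c)` is metric if each entry is at most the sum of the other two. -/
def IsMetricTriple (a b c : ℝ) : Prop :=
  a ≤ b + c ∧ b ≤ a + c ∧ c ≤ a + b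

/-- The 4-values condition. -/
def FourValues (S : Set ℝ) : Prop :=
  ∀ a ∈ S, ∀ b ∈ S, ∀ c ∈ S, ∀ d ∈ S,
    max b (max c d) ≤ a → a ≤ b + c + d →
      ∀ x ∈ S, IsMetricTriple a b x → IsMetricTriple c d x →
        ∃ y ∈ S, IsMetricTriple a d y ∧ IsMetricTriple c b y

lemma oplus_comm (R : Set ℝ) (a b : ℝ) : oplus R a b = oplus R b a := by
  unfold oplus; rw [add_comm]

lemma le_oplus' {S : Set ℝ} {a b z : ℝ} (hz : z ∈ S) (h : z ≤ a + b) :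
    z ≤ oplus S a b :=
  le_csSup ⟨a + b, fun x hx => hx.2⟩ ⟨hz, h⟩

lemma oplus_mem {S : Set ℝ} (hcl : IsClosed S) {a b : ℝ} (ha : a ∈ S) (hb : 0 ≤ b) :
    oplus S a b ∈ S ∧ a ≤ oplus S a b ∧ oplus S a b ≤ a + b := by
  have hA : IsClosed {x | x ∈ S ∧ x ≤ a + b} := by
    have : {x | x ∈ S ∧ x ≤ a + b} = S ∩ Set.Iic (a + b) := rfl
    rw [this]; exact hcl.inter isClosed_Iic
  have hne : {x | x ∈ S ∧ x ≤ a + b}.Nonempty := ⟨a, ha, by linarith⟩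
  have hbd : BddAbove {x | x ∈ S ∧ x ≤ a + b} := ⟨a + b, fun x hx => hx.2⟩
  have hmem := hA.csSup_mem hne hbd
  exact ⟨hmem.1, le_oplus' ha (by linarith), csSup_le hne fun x hx => hx.2⟩

lemma oplus_le_oplus_of_fourValues {S : Set ℝ} (hcl : IsClosed S)
    (hpos : ∀ x ∈ S, 0 ≤ x) (h4 : FourValues S)
    {a b c : ℝ} (ha : a ∈ S) (hb : b ∈ S) (hc : c ∈ S) :
    oplus S (oplus S a b) c ≤ oplus S a (oplus S b c) := by
  have ha0 := hpos a ha; have hb0 := hpos b hb; have hc0 := hpos c hc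
  obtain ⟨huS, hau, hub⟩ := oplus_mem hcl ha hb0
  set u := oplus S a b with hu
  have hbu : b ≤ u := le_oplus' hb (by linarith)
  obtain ⟨heS, hue, hec⟩ := oplus_mem hcl huS hc0
  set e := oplus S u c with he
  have hce : c ≤ e := le_oplus' hc (by linarith)
  have hu0 := hpos u huS; have he0 := hpos e heS
  obtain ⟨y, hyS, t1, t2⟩ := h4 e heS c hc b hb a ha
    (max_le hce (max_le (le_trans hbu hue) (le_trans hau hue))) (by linarith)
    u huS ⟨by linarith, by linarith, by linarith⟩ ⟨by linarith, by linarith, by linarith⟩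
  -- t1 : IsMetricTriple e a y, t2 : IsMetricTriple b c y
  have h1 : e ≤ a + y := t1.1
  have h2 : y ≤ b + c := t2.2.2
  have hybc : y ≤ oplus S b c := le_oplus' hyS h2
  exact le_oplus' heS (by linarith)

lemma oplus_assoc_of_fourValues {S : Set ℝ} (hcl : IsClosed S)
    (hpos : ∀ x ∈ S, 0 ≤ x) (h4 : FourValues S)
    {a b c : ℝ} (ha : a ∈ S) (hb : b ∈ S) (hc : c ∈ S) :
    oplus S (oplus S a b) c = oplus S a (oplus S b c) := by
  refine le_antisymm (oplus_le_oplus_of_fourValues hcl hpos h4 ha hb hc) ?_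
  have h := oplus_le_oplus_of_fourValues hcl hpos h4 hc hb ha
  calc oplus S a (oplus S b c) = oplus S (oplus S c b) a := by
        rw [oplus_comm S c b, oplus_comm S a (oplus S b c)]
    _ ≤ oplus S c (oplus S b a) := h
    _ = oplus S (oplus S a b) c := by
        rw [oplus_comm S b a, oplus_comm S c (oplus S a b)]

lemma fourValues_of_oplus_assoc {S : Set ℝ} (hcl : IsClosed S)
    (hpos : ∀ x ∈ S, 0 ≤ x)
    (hassoc : ∀ a ∈ S, ∀ b ∈ S, ∀ c ∈ S,
      oplus S (oplus S a b) c = oplus S a (oplus S b c)) :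
    FourValues S := by
  intro a ha b hb c hc d hd hmax hsum x hx h1 h2
  have hb0 := hpos b hb; have hc0 := hpos c hc; have hd0 := hpos d hd
  have hba : b ≤ a := le_trans (le_max_left _ _) hmax
  have hca : c ≤ a := le_trans (le_trans (le_max_left _ _) (le_max_right _ _)) hmax
  have hda : d ≤ a := le_trans (le_trans (le_max_right _ _) (le_max_right _ _)) hmax
  obtain ⟨hcdS, hccd, hcdub⟩ := oplus_mem hcl hc hd0
  have hxcd : x ≤ oplus S c d := le_oplus' hx h2.2.2
  have hab : a ≤ b + x := h1.1
  have haB : a ≤ oplus S b (oplus S c d) := le_oplus' ha (by linarith)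
  rw [← hassoc b hb c hc d hd] at haB
  obtain ⟨hbcS, hbbc, hbcub⟩ := oplus_mem hcl hb hc0
  have haE : a ≤ oplus S b c + d := le_trans haB (oplus_mem hcl hbcS hd0).2.2
  set e := oplus S b c with he
  have hcbc : c ≤ e := le_oplus' hc (by linarith)
  obtain ⟨hfS, haf, hfub⟩ := oplus_mem hcl ha hd0
  set f := oplus S a d with hf
  have he0 := hpos e hbcS; have hf0 := hpos f hfS
  rcases le_total f e with hfe | hef
  · refine ⟨f, hfS, ⟨by linarith, by linarith, by linarith⟩,
      ⟨by linarith, by linarith, by linarith⟩⟩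
  · refine ⟨e, hbcS, ⟨by linarith, by linarith, by linarith⟩,
      ⟨by linarith, by linarith, by linarith⟩⟩

/-- If `R` is a nonempty closed bounded subset of the nonnegative reals satisfying
the 4-values condition and `l > 2·max R`, then `{r + n·l | n ∈ ℕ, r ∈ R}` is a
closed subset of the nonnegative reals satisfying the 4-values condition. -/
theorem translates_fourValues (R : Set ℝ) (hne : R.Nonempty) (hcl : IsClosed R)
    (hpos : ∀ x ∈ R, 0 ≤ x) (hbdd : BddAbove R) (h4 : FourValues R)
    (l : ℝ) (hl : 2 * sSup R < l) :
    ∀ T : Set ℝ, T = {x | ∃ n : ℕ, ∃ r ∈ R, x = r + n * l} →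
      IsClosed T ∧ (∀ x ∈ T, 0 ≤ x) ∧ FourValues T := by
  intro T hT
  set M := sSup R with hM
  obtain ⟨r₀, hr₀⟩ := hne
  have hM0 : 0 ≤ M := le_trans (hpos r₀ hr₀) (le_csSup hbdd hr₀)
  have hrM : ∀ r ∈ R, r ≤ M := fun r hr => le_csSup hbdd hr
  have hl0 : 0 < l := by linarith
  -- membership and decomposition
  have hmemT : ∀ r ∈ R, ∀ n : ℕ, r + n * l ∈ T := by
    intro r hr n; rw [hT]; exact ⟨n, r, hr, rfl⟩
  have hdec : ∀ t ∈ T, ∃ n : ℕ, ∃ r ∈ R, t = r + n * l := by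
    intro t ht; rw [hT] at ht; exact ht
  -- closedness
  have hTclosed : IsClosed T := by
    have hTeq : T = ⋃ n : ℕ, (fun r => r + n * l) '' R := by
      rw [hT]; ext z
      simp only [Set.mem_iUnion, Set.mem_image, Set.mem_setOf_eq]
      constructor
      · rintro ⟨n, r, hr, rfl⟩; exact ⟨n, r, hr, rfl⟩
      · rintro ⟨n, r, hr, rfl⟩; exact ⟨n, r, hr, rfl⟩
    rw [hTeq]
    apply LocallyFinite.isClosed_iUnion
    · intro z
      refine ⟨Set.Ioo (z - 1) (z + 1), Ioo_mem_nhds (by linarith) (by linarith), ?_⟩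
      apply Set.Finite.subset (Set.finite_Iio (Nat.ceil ((z + 1) / l)))
      rintro n ⟨w, ⟨r, hr, rfl⟩, hw1, hw2⟩
      have hr0 := hpos r hr
      have hw2' : r + n * l < z + 1 := hw2
      have : (n : ℝ) * l < z + 1 := by linarith
      have : (n : ℝ) < (z + 1) / l := (lt_div_iff₀ hl0).mpr this
      exact Nat.lt_ceil.mpr this
    · intro n
      have : (fun r => r + n * l) '' R = (fun x => x - n * l) ⁻¹' R := by
        ext w
        simp only [Set.mem_image, Set.mem_preimage]
        constructor
        · rintro ⟨r, hr, rfl⟩; simpa using hr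
        · intro h; exact ⟨w - n * l, h, by ring⟩
      rw [this]
      exact hcl.preimage (continuous_id.sub continuous_const)
  -- positivity
  have hTpos : ∀ x ∈ T, 0 ≤ x := by
    intro x hx
    obtain ⟨n, r, hr, rfl⟩ := hdec x hx
    have := hpos r hr
    positivity
  refine ⟨hTclosed, hTpos, ?_⟩
  -- oplus on T
  have hoplusT : ∀ a₀ ∈ R, ∀ b₀ ∈ R, ∀ p q : ℕ,
      oplus T (a₀ + p * l) (b₀ + q * l) = oplus R a₀ b₀ + (p + q : ℕ) * l := by
    intro a₀ ha₀ b₀ hb₀ p q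
    obtain ⟨hwR, haw, hwub⟩ := oplus_mem hcl ha₀ (hpos b₀ hb₀)
    set w := oplus R a₀ b₀ with hw
    have hw0 := hpos w hwR
    have ha₀M := hrM a₀ ha₀; have hb₀M := hrM b₀ hb₀
    apply le_antisymm
    · unfold oplus
      refine csSup_le ⟨w + (p + q : ℕ) * l,
        hmemT w hwR (p + q), by push_cast; linarith⟩ ?_
      rintro z ⟨hzT, hzle⟩
      obtain ⟨n, z₀, hz₀, rfl⟩ := hdec z hzT
      have hz₀0 := hpos z₀ hz₀; have hz₀M := hrM z₀ hz₀
      rcases lt_trichotomy n (p + q) with hn | hn | hn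
      · have : (n : ℝ) + 1 ≤ (p + q : ℕ) := by exact_mod_cast hn
        push_cast at this ⊢
        nlinarith
      · subst hn
        push_cast at hzle ⊢
        have : z₀ ≤ a₀ + b₀ := by linarith
        have := le_oplus' hz₀ this
        linarith
      · exfalso
        have : ((p + q : ℕ) : ℝ) + 1 ≤ (n : ℝ) := by exact_mod_cast hn
        push_cast at this hzle
        nlinarith
    · apply le_oplus' (hmemT w hwR (p + q))
      push_cast; linarith
  -- associativity on T
  have hassocR := fun a ha b hb c hc =>
    oplus_assoc_of_fourValues hcl hpos h4 (a := a) (b := b) (c := c) ha hb hc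
  have hassocT : ∀ a ∈ T, ∀ b ∈ T, ∀ c ∈ T,
      oplus T (oplus T a b) c = oplus T a (oplus T b c) := by
    intro a ha b hb c hc
    obtain ⟨p, a₀, ha₀, rfl⟩ := hdec a ha
    obtain ⟨q, b₀, hb₀, rfl⟩ := hdec b hb
    obtain ⟨s, c₀, hc₀, rfl⟩ := hdec c hc
    have habR := (oplus_mem hcl ha₀ (hpos b₀ hb₀)).1
    have hbcR := (oplus_mem hcl hb₀ (hpos c₀ hc₀)).1
    rw [hoplusT a₀ ha₀ b₀ hb₀ p q, hoplusT (oplus R a₀ b₀) habR c₀ hc₀ (p + q) s,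
        hoplusT b₀ hb₀ c₀ hc₀ q s, hoplusT a₀ ha₀ (oplus R b₀ c₀) hbcR p (q + s),
        hassocR a₀ ha₀ b₀ hb₀ c₀ hc₀]
    push_cast; ring
  exact fourValues_of_oplus_assoc hTclosed hTpos hassocT
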